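/- Let K be ℝ or ℂ, d ≥ 1, and fix a norm ‖·‖ on K^d. Let 𝒜 be an irreducible compact set of d×d matrices over K, let ‖·‖_𝒜 be any Barabanov norm for 𝒜, let C = ecc(‖·‖_𝒜, ‖·‖), and let ℬ be any nonempty bounded set of d×d matrices over K. Then ρ(ℬ) ≥ ρ(𝒜) − C·H(𝒜,ℬ). -/

import Mathlib

open Filter Set

namespace JSRPaper

section Defs

variable {d : ℕ} {K : Type*} [RCLike K]

/-- `N` is a norm on `Fin d → K` (`K` is `ℝ` or `ℂ`). -/
def IsNorm (N : (Fin d → K) → ℝ) : Prop :=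
  (∀ x, 0 ≤ N x) ∧ (∀ x, N x = 0 ↔ x = 0) ∧
    (∀ (c : K) (x : Fin d → K), N (c • x) = ‖c‖ * N x) ∧
    (∀ x y, N (x + y) ≤ N x + N y)

/-- Operator norm of a matrix induced by the norm `N` on `Fin d → K`. -/
noncomputable def opNorm (N : (Fin d → K) → ℝ) (A : Matrix (Fin d) (Fin d) K) : ℝ :=
  sSup {r : ℝ | ∃ x : Fin d → K, N x = 1 ∧ r = N (A.mulVec x)}

/-- `‖𝒜‖ = sup_{A ∈ 𝒜} ‖A‖`. -/
noncomputable def setNorm (N : (Fin d → K) → ℝ) (𝒜 : Set (Matrix (Fin d) (Fin d) K)) : ℝ :=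
  sSup (opNorm N '' 𝒜)

/-- `𝒜^n`: the set of all products of `n` matrices from `𝒜`, with `𝒜^0 = {I}`. -/
def prodSet (𝒜 : Set (Matrix (Fin d) (Fin d) K)) : ℕ → Set (Matrix (Fin d) (Fin d) K)
  | 0 => {1}
  | n + 1 => {M | ∃ A ∈ 𝒜, ∃ P ∈ prodSet 𝒜 n, M = A * P}

/-- The joint spectral radius `ρ(𝒜) = limsup_{n → ∞} ‖𝒜^n‖^{1/n}`. -/
noncomputable def jsr (N : (Fin d → K) → ℝ) (𝒜 : Set (Matrix (Fin d) (Fin d) K)) : ℝ :=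
  Filter.limsup (fun n : ℕ => setNorm N (prodSet 𝒜 n) ^ ((n : ℝ)⁻¹)) Filter.atTop

/-- `𝒜` is irreducible: the matrices of `𝒜` have no common invariant subspace
other than `{0}` and `K^d`. -/
def IsIrred (𝒜 : Set (Matrix (Fin d) (Fin d) K)) : Prop :=
  ∀ W : Submodule K (Fin d → K), (∀ A ∈ 𝒜, ∀ x ∈ W, A.mulVec x ∈ W) → W = ⊥ ∨ W = ⊤

/-- `ℬ` is a bounded set of matrices (w.r.t. the operator norm induced by `N`). -/
def IsBdd (N : (Fin d → K) → ℝ) (ℬ : Set (Matrix (Fin d) (Fin d) K)) : Prop :=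
  ∃ C : ℝ, ∀ B ∈ ℬ, opNorm N B ≤ C

/-- The `p`-measure of irreducibility `χ_p(𝒜)`:
`inf_{‖x‖=1} sup { t : ball(0,t) ⊆ conv(𝒜_p(x) ∪ 𝒜_p(-x)) }`, where
`𝒜_p = ⋃_{k ≤ p} 𝒜^k`. -/
noncomputable def chi (N : (Fin d → K) → ℝ) (𝒜 : Set (Matrix (Fin d) (Fin d) K)) (p : ℕ) : ℝ :=
  sInf {s : ℝ | ∃ x : Fin d → K, N x = 1 ∧
    s = sSup {t : ℝ | {y : Fin d → K | N y ≤ t} ⊆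
      convexHull ℝ
        (((fun A : Matrix (Fin d) (Fin d) K => A.mulVec x) ''
            ⋃ k ∈ Finset.range (p + 1), prodSet 𝒜 k) ∪
          ((fun A : Matrix (Fin d) (Fin d) K => A.mulVec (-x)) ''
            ⋃ k ∈ Finset.range (p + 1), prodSet 𝒜 k))}}

/-- `ν_p(𝒜) = max{1, ‖𝒜‖^p} / χ_p(𝒜)`. -/
noncomputable def nu (N : (Fin d → K) → ℝ) (𝒜 : Set (Matrix (Fin d) (Fin d) K)) (p : ℕ) : ℝ :=
  max 1 (setNorm N 𝒜 ^ p) / chi N 𝒜 p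

/-- The Hausdorff distance between two matrix sets, w.r.t. the operator norm induced by `N`. -/
noncomputable def hdist (N : (Fin d → K) → ℝ) (𝒜 ℬ : Set (Matrix (Fin d) (Fin d) K)) : ℝ :=
  max (sSup ((fun A => sInf ((fun B => opNorm N (A - B)) '' ℬ)) '' 𝒜))
      (sSup ((fun B => sInf ((fun A => opNorm N (A - B)) '' 𝒜)) '' ℬ))

/-- `Nb` is a Barabanov norm for `𝒜`: it is a norm on `K^d` and
`ρ(𝒜)·‖x‖_b = max_{A ∈ 𝒜} ‖A x‖_b` for all `x` (`ρ(𝒜)` computed w.r.t. the reference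
norm `N`; its value does not depend on this choice). -/
def IsBarabanov (N Nb : (Fin d → K) → ℝ) (𝒜 : Set (Matrix (Fin d) (Fin d) K)) : Prop :=
  IsNorm Nb ∧ ∀ x : Fin d → K,
    jsr N 𝒜 * Nb x = sSup {r : ℝ | ∃ A ∈ 𝒜, r = Nb (A.mulVec x)}

/-- The eccentricity `ecc(N', N'') = (max_{x ≠ 0} N' x / N'' x) / (min_{x ≠ 0} N' x / N'' x)`. -/
noncomputable def eccen (N' N'' : (Fin d → K) → ℝ) : ℝ :=
  sSup {r : ℝ | ∃ x : Fin d → K, x ≠ 0 ∧ r = N' x / N'' x} /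
    sInf {r : ℝ | ∃ x : Fin d → K, x ≠ 0 ∧ r = N' x / N'' x}

end Defs

/-!
By compactness some `A ∈ 𝒜` attains the Barabanov maximum, `‖A y‖_𝒜 = ρ(𝒜) ‖y‖_𝒜`; take `B ∈ ℬ` with
`‖A - B‖ < H(𝒜, ℬ) + ε`. Measured in `‖·‖_𝒜`, the operator norm of `A - B` is at most
`C ‖A - B‖`, so `‖B y‖_𝒜 ≥ (ρ(𝒜) - C (H + ε)) ‖y‖_𝒜`. Choosing such a `B` at every step of a
trajectory gives products in `ℬ^n` whose norms grow at least like `(ρ(𝒜) - C (H + ε))^n`,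
hence `ρ(ℬ) ≥ ρ(𝒜) - C (H + ε)` for every `ε > 0`.
-/

open scoped Matrix Topology

namespace IsNorm

variable {d : ℕ} {K : Type*} [RCLike K] {N M : (Fin d → K) → ℝ}

lemma nonneg (hN : IsNorm N) (x : Fin d → K) : 0 ≤ N x := hN.1 x

lemma eq_zero_iff (hN : IsNorm N) {x : Fin d → K} : N x = 0 ↔ x = 0 := hN.2.1 x

lemma map_smul (hN : IsNorm N) (c : K) (x : Fin d → K) : N (c • x) = ‖c‖ * N x := hN.2.2.1 c x

lemma add_le (hN : IsNorm N) (x y : Fin d → K) : N (x + y) ≤ N x + N y := hN.2.2.2 x y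

lemma map_zero (hN : IsNorm N) : N 0 = 0 := hN.eq_zero_iff.mpr rfl

lemma pos (hN : IsNorm N) {x : Fin d → K} (hx : x ≠ 0) : 0 < N x :=
  (hN.nonneg x).lt_of_ne' (mt hN.eq_zero_iff.mp hx)

lemma map_neg (hN : IsNorm N) (x : Fin d → K) : N (-x) = N x := by
  rw [← neg_one_smul K x, hN.map_smul, norm_neg, norm_one, one_mul]

lemma map_ofReal_smul (hN : IsNorm N) {r : ℝ} (hr : 0 ≤ r) (x : Fin d → K) :
    N ((r : K) • x) = r * N x := by
  rw [hN.map_smul, RCLike.norm_ofReal, abs_of_nonneg hr]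

lemma exists_le_mul_norm (hN : IsNorm N) : ∃ C, 0 < C ∧ ∀ x, N x ≤ C * ‖x‖ := by
  classical
  have hsum : 0 ≤ ∑ i, N (Pi.single i 1) := Finset.sum_nonneg fun i _ => hN.nonneg _
  refine ⟨∑ i, N (Pi.single i 1) + 1, by linarith, fun x => ?_⟩
  calc N x = N (∑ i, x i • Pi.single i 1) := by rw [← pi_eq_sum_univ' x]
    _ ≤ ∑ i, N (x i • Pi.single i 1) :=
      Finset.le_sum_of_subadditive N hN.map_zero.le hN.add_le _ _
    _ ≤ ∑ i, ‖x‖ * N (Pi.single i 1) := by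
      gcongr with i
      rw [hN.map_smul]
      exact mul_le_mul_of_nonneg_right (norm_le_pi_norm x i) (hN.nonneg _)
    _ ≤ (∑ i, N (Pi.single i 1) + 1) * ‖x‖ := by
      rw [← Finset.mul_sum]
      nlinarith [norm_nonneg x]

lemma continuous (hN : IsNorm N) : Continuous N := by
  obtain ⟨C, hC, hNC⟩ := hN.exists_le_mul_norm
  refine (LipschitzWith.of_dist_le_mul (K := C.toNNReal) fun x y => ?_).continuous
  have hxy : N x ≤ N y + N (x - y) := by simpa using hN.add_le y (x - y)
  have hyx : N y ≤ N x + N (x - y) := by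
    rw [← hN.map_neg (x - y), neg_sub]
    simpa using hN.add_le x (y - x)
  rw [Real.dist_eq, dist_eq_norm, Real.coe_toNNReal C hC.le]
  exact abs_sub_le_iff.mpr ⟨by linarith [hNC (x - y)], by linarith [hNC (x - y)]⟩

lemma exists_mul_norm_le (hd : 1 ≤ d) (hN : IsNorm N) : ∃ c, 0 < c ∧ ∀ x, c * ‖x‖ ≤ N x := by
  have hsphere : (Metric.sphere (0 : Fin d → K) 1).Nonempty :=
    ⟨Pi.single ⟨0, hd⟩ 1, by simp [Pi.norm_single]⟩
  obtain ⟨m, hm, hmin⟩ :=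
    (isCompact_sphere 0 1).exists_isMinOn hsphere hN.continuous.continuousOn
  have hm0 : m ≠ 0 := ne_zero_of_mem_unit_sphere ⟨m, hm⟩
  refine ⟨N m, hN.pos hm0, fun x => ?_⟩
  rcases eq_or_ne x 0 with rfl | hx
  · simp [hN.map_zero]
  have hxpos : 0 < ‖x‖ := norm_pos_iff.mpr hx
  have hunit : ((‖x‖⁻¹ : ℝ) : K) • x ∈ Metric.sphere (0 : Fin d → K) 1 := by
    simp [norm_smul, hxpos.ne']
  have hle : N m ≤ ‖x‖⁻¹ * N x :=
    (show N m ≤ _ from hmin hunit).trans_eq (hN.map_ofReal_smul (inv_nonneg.mpr hxpos.le) x)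
  calc N m * ‖x‖ ≤ ‖x‖⁻¹ * N x * ‖x‖ := by gcongr
    _ = N x := by field_simp

lemma exists_eq_one (hd : 1 ≤ d) (hN : IsNorm N) : ∃ x, N x = 1 := by
  have hx : (Pi.single ⟨0, hd⟩ 1 : Fin d → K) ≠ 0 := by simp
  have hpos := hN.pos hx
  exact ⟨(((N (Pi.single ⟨0, hd⟩ 1))⁻¹ : ℝ) : K) • Pi.single ⟨0, hd⟩ 1, by
    rw [hN.map_ofReal_smul (inv_nonneg.mpr hpos.le), inv_mul_cancel₀ hpos.ne']⟩

lemma exists_le_mul (hd : 1 ≤ d) (hM : IsNorm M) (hN : IsNorm N) :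
    ∃ C, 0 < C ∧ ∀ x, M x ≤ C * N x := by
  obtain ⟨C, hC, hMC⟩ := hM.exists_le_mul_norm
  obtain ⟨c, hc, hcN⟩ := hN.exists_mul_norm_le hd
  refine ⟨C / c, div_pos hC hc, fun x => ?_⟩
  calc M x ≤ C * ‖x‖ := hMC x
    _ = C / c * (c * ‖x‖) := by field_simp
    _ ≤ C / c * N x := by gcongr; exact hcN x

end IsNorm

lemma norm_mulVec_le_sum_norm {m n R : Type*} [Fintype m] [Fintype n] [SeminormedRing R]
    (A : Matrix m n R) (x : n → R) : ‖A *ᵥ x‖ ≤ (∑ i, ∑ j, ‖A i j‖) * ‖x‖ := by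
  refine (pi_norm_le_iff_of_nonneg (by positivity)).mpr fun i => ?_
  calc ‖∑ j, A i j * x j‖ ≤ ∑ j, ‖A i j‖ * ‖x‖ :=
        (norm_sum_le _ _).trans <| Finset.sum_le_sum fun j _ =>
          (norm_mul_le _ _).trans (by gcongr; exact norm_le_pi_norm x j)
    _ = (∑ j, ‖A i j‖) * ‖x‖ := by rw [Finset.sum_mul]
    _ ≤ (∑ i, ∑ j, ‖A i j‖) * ‖x‖ := by
      gcongr
      exact Finset.single_le_sum (f := fun i => ∑ j, ‖A i j‖)
        (fun i _ => by positivity) (Finset.mem_univ i)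

section OpNorm

variable {d : ℕ} {K : Type*} [RCLike K] {N : (Fin d → K) → ℝ}

lemma exists_apply_mulVec_le (hd : 1 ≤ d) (hN : IsNorm N) :
    ∃ κ, 0 ≤ κ ∧ ∀ (A : Matrix (Fin d) (Fin d) K) x,
      N (A *ᵥ x) ≤ κ * (∑ i, ∑ j, ‖A i j‖) * N x := by
  obtain ⟨C, hC, hNC⟩ := hN.exists_le_mul_norm
  obtain ⟨c, hc, hcN⟩ := hN.exists_mul_norm_le hd
  refine ⟨C / c, by positivity, fun A x => ?_⟩
  calc N (A *ᵥ x) ≤ C * ((∑ i, ∑ j, ‖A i j‖) * ‖x‖) :=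
        (hNC _).trans (by gcongr; exact norm_mulVec_le_sum_norm A x)
    _ = C / c * (∑ i, ∑ j, ‖A i j‖) * (c * ‖x‖) := by field_simp
    _ ≤ C / c * (∑ i, ∑ j, ‖A i j‖) * N x := by gcongr; exact hcN x

lemma bddAbove_opNorm_set (hd : 1 ≤ d) (hN : IsNorm N) (A : Matrix (Fin d) (Fin d) K) :
    BddAbove {r : ℝ | ∃ x : Fin d → K, N x = 1 ∧ r = N (A.mulVec x)} := by
  obtain ⟨κ, -, hκ⟩ := exists_apply_mulVec_le hd hN
  refine ⟨κ * ∑ i, ∑ j, ‖A i j‖, ?_⟩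
  rintro r ⟨x, hx, rfl⟩
  simpa [hx] using hκ A x

lemma opNorm_nonneg (hN : IsNorm N) (A : Matrix (Fin d) (Fin d) K) : 0 ≤ opNorm N A :=
  Real.sSup_nonneg fun _ ⟨_, _, hr⟩ => hr ▸ hN.nonneg _

lemma apply_le_opNorm (hd : 1 ≤ d) (hN : IsNorm N) (A : Matrix (Fin d) (Fin d) K)
    {x : Fin d → K} (hx : N x = 1) : N (A *ᵥ x) ≤ opNorm N A :=
  le_csSup (bddAbove_opNorm_set hd hN A) ⟨x, hx, rfl⟩

lemma apply_le_opNorm_mul (hd : 1 ≤ d) (hN : IsNorm N) (A : Matrix (Fin d) (Fin d) K)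
    (x : Fin d → K) : N (A *ᵥ x) ≤ opNorm N A * N x := by
  rcases eq_or_ne x 0 with rfl | hx
  · simp [hN.map_zero]
  have hpos := hN.pos hx
  have hunit : N ((((N x)⁻¹ : ℝ) : K) • x) = 1 := by
    rw [hN.map_ofReal_smul (inv_nonneg.mpr hpos.le), inv_mul_cancel₀ hpos.ne']
  have hle := apply_le_opNorm hd hN A hunit
  rw [Matrix.mulVec_smul, hN.map_ofReal_smul (inv_nonneg.mpr hpos.le), inv_mul_le_iff₀ hpos]
    at hle
  linarith

lemma opNorm_le_of_forall {A : Matrix (Fin d) (Fin d) K} {C : ℝ} (hC : 0 ≤ C)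
    (h : ∀ x, N x = 1 → N (A *ᵥ x) ≤ C) : opNorm N A ≤ C :=
  Real.sSup_le (fun _ ⟨x, hx, hr⟩ => hr ▸ h x hx) hC

lemma opNorm_one_le : opNorm N (1 : Matrix (Fin d) (Fin d) K) ≤ 1 :=
  opNorm_le_of_forall zero_le_one fun x hx => by rw [Matrix.one_mulVec, hx]

lemma opNorm_mul_le (hd : 1 ≤ d) (hN : IsNorm N) (A B : Matrix (Fin d) (Fin d) K) :
    opNorm N (A * B) ≤ opNorm N A * opNorm N B := by
  refine opNorm_le_of_forall (mul_nonneg (opNorm_nonneg hN A) (opNorm_nonneg hN B))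
    fun x hx => ?_
  calc N ((A * B) *ᵥ x) = N (A *ᵥ (B *ᵥ x)) := by rw [Matrix.mulVec_mulVec]
    _ ≤ opNorm N A * N (B *ᵥ x) := apply_le_opNorm_mul hd hN A _
    _ ≤ opNorm N A * opNorm N B := by
      gcongr
      · exact opNorm_nonneg hN A
      · exact apply_le_opNorm hd hN B hx

lemma bddAbove_opNorm_image (hd : 1 ≤ d) (hN : IsNorm N)
    {S : Set (Matrix (Fin d) (Fin d) K)} (hS : IsCompact S) : BddAbove (opNorm N '' S) := by
  obtain ⟨κ, hκ0, hκ⟩ := exists_apply_mulVec_le hd hN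
  have hcont : Continuous fun A : Matrix (Fin d) (Fin d) K => κ * ∑ i, ∑ j, ‖A i j‖ := by
    fun_prop
  obtain ⟨b, hb⟩ := hS.bddAbove_image hcont.continuousOn
  refine ⟨b, ?_⟩
  rintro _ ⟨A, hA, rfl⟩
  refine le_trans ?_ (hb ⟨A, hA, rfl⟩)
  exact opNorm_le_of_forall (by positivity) fun x hx => by simpa [hx] using hκ A x

end OpNorm

lemma le_limsup_rpow_inv_of_mul_pow_le {a : ℕ → ℝ} {κ s : ℝ} (hκ : 0 < κ) (hs : 0 ≤ s)
    (ha : ∀ n, κ * s ^ n ≤ a n)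
    (hbdd : IsBoundedUnder (· ≤ ·) atTop fun n : ℕ => a n ^ (n : ℝ)⁻¹) :
    s ≤ limsup (fun n : ℕ => a n ^ (n : ℝ)⁻¹) atTop := by
  have hlim : Tendsto (fun n : ℕ => κ ^ (n : ℝ)⁻¹ * s) atTop (𝓝 s) := by
    have hinv : Tendsto (fun n : ℕ => (n : ℝ)⁻¹) atTop (𝓝 0) :=
      tendsto_inv_atTop_zero.comp tendsto_natCast_atTop_atTop
    simpa using ((Real.continuousAt_const_rpow hκ.ne').tendsto.comp hinv).mul_const s
  have hle : ∀ᶠ n : ℕ in atTop, κ ^ (n : ℝ)⁻¹ * s ≤ a n ^ (n : ℝ)⁻¹ := by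
    filter_upwards [eventually_ne_atTop 0] with n hn
    calc κ ^ (n : ℝ)⁻¹ * s = (κ * s ^ n) ^ (n : ℝ)⁻¹ := by
          rw [Real.mul_rpow hκ.le (by positivity), Real.pow_rpow_inv_natCast hs hn]
      _ ≤ a n ^ (n : ℝ)⁻¹ := by gcongr; exact ha n
  calc s = limsup (fun n : ℕ => κ ^ (n : ℝ)⁻¹ * s) atTop := hlim.limsup_eq.symm
    _ ≤ _ := limsup_le_limsup hle hlim.isBoundedUnder_ge.isCoboundedUnder_le hbdd

section Products

variable {d : ℕ} {K : Type*} [RCLike K] {N : (Fin d → K) → ℝ}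
  {ℬ : Set (Matrix (Fin d) (Fin d) K)}

lemma exists_mem_prodSet_pow_mul_le {M : (Fin d → K) → ℝ} {s : ℝ} (hs : 0 ≤ s)
    (h : ∀ y, ∃ B ∈ ℬ, s * M y ≤ M (B *ᵥ y)) (x : Fin d → K) :
    ∀ n, ∃ P ∈ prodSet ℬ n, s ^ n * M x ≤ M (P *ᵥ x)
  | 0 => ⟨1, rfl, by simp⟩
  | n + 1 => by
    obtain ⟨P, hP, hPx⟩ := exists_mem_prodSet_pow_mul_le hs h x n
    obtain ⟨B, hB, hBPx⟩ := h (P *ᵥ x)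
    refine ⟨B * P, ⟨B, hB, P, hP, rfl⟩, ?_⟩
    calc s ^ (n + 1) * M x = s * (s ^ n * M x) := by ring
      _ ≤ s * M (P *ᵥ x) := by gcongr
      _ ≤ M ((B * P) *ᵥ x) := by rwa [← Matrix.mulVec_mulVec]

lemma opNorm_le_pow_of_mem_prodSet (hd : 1 ≤ d) (hN : IsNorm N) {C : ℝ} (hC0 : 0 ≤ C)
    (hC : ∀ B ∈ ℬ, opNorm N B ≤ C) : ∀ n, ∀ P ∈ prodSet ℬ n, opNorm N P ≤ C ^ n
  | 0, _, rfl => by simpa using opNorm_one_le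
  | n + 1, _, ⟨B, hB, P, hP, rfl⟩ =>
    calc opNorm N (B * P) ≤ opNorm N B * opNorm N P := opNorm_mul_le hd hN B P
      _ ≤ C * C ^ n := by
        gcongr
        exacts [opNorm_nonneg hN P, hC B hB, opNorm_le_pow_of_mem_prodSet hd hN hC0 hC n P hP]
      _ = C ^ (n + 1) := by ring

lemma IsBdd.exists_nonneg (hℬ : IsBdd N ℬ) : ∃ C, 0 ≤ C ∧ ∀ B ∈ ℬ, opNorm N B ≤ C := by
  obtain ⟨C, hC⟩ := hℬ
  exact ⟨max C 0, le_max_right C 0, fun B hB => (hC B hB).trans (le_max_left C 0)⟩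

lemma opNorm_le_setNorm_prodSet (hd : 1 ≤ d) (hN : IsNorm N) (hℬ : IsBdd N ℬ) {n : ℕ}
    {P : Matrix (Fin d) (Fin d) K} (hP : P ∈ prodSet ℬ n) :
    opNorm N P ≤ setNorm N (prodSet ℬ n) := by
  obtain ⟨C, hC0, hC⟩ := hℬ.exists_nonneg
  refine le_csSup ⟨C ^ n, ?_⟩ (mem_image_of_mem _ hP)
  rintro _ ⟨Q, hQ, rfl⟩
  exact opNorm_le_pow_of_mem_prodSet hd hN hC0 hC n Q hQ

lemma IsBdd.isBoundedUnder_setNorm_prodSet (hd : 1 ≤ d) (hN : IsNorm N) (hℬ : IsBdd N ℬ) :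
    IsBoundedUnder (· ≤ ·) atTop fun n : ℕ => setNorm N (prodSet ℬ n) ^ (n : ℝ)⁻¹ := by
  obtain ⟨C, hC0, hC⟩ := hℬ.exists_nonneg
  refine isBoundedUnder_of ⟨max 1 C, fun n => ?_⟩
  rcases eq_or_ne n 0 with rfl | hn
  · simp
  have hnorm : setNorm N (prodSet ℬ n) ≤ C ^ n :=
    Real.sSup_le (fun _ ⟨P, hP, hr⟩ => hr ▸ opNorm_le_pow_of_mem_prodSet hd hN hC0 hC n P hP)
      (by positivity)
  calc setNorm N (prodSet ℬ n) ^ (n : ℝ)⁻¹ ≤ (C ^ n) ^ (n : ℝ)⁻¹ := by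
        gcongr
        exact Real.sSup_nonneg fun _ ⟨P, _, hr⟩ => hr ▸ opNorm_nonneg hN P
    _ = C := Real.pow_rpow_inv_natCast hC0 hn
    _ ≤ max 1 C := le_max_right 1 C

theorem le_jsr_of_forall_exists_mul_le (hd : 1 ≤ d) (hN : IsNorm N)
    {M : (Fin d → K) → ℝ} (hM : IsNorm M) (hℬ : IsBdd N ℬ) {s : ℝ}
    (h : ∀ y, ∃ B ∈ ℬ, s * M y ≤ M (B *ᵥ y)) : s ≤ jsr N ℬ := by
  wlog hs : 0 ≤ s generalizing s
  · refine (le_of_not_ge hs).trans (this (fun y => ?_) le_rfl)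
    obtain ⟨B, hB, -⟩ := h y
    exact ⟨B, hB, by simpa using hM.nonneg _⟩
  obtain ⟨x, hx⟩ := hN.exists_eq_one hd
  have hx0 : x ≠ 0 := by rintro rfl; simp [hN.map_zero] at hx
  obtain ⟨C, hC, hMN⟩ := hM.exists_le_mul hd hN
  refine le_limsup_rpow_inv_of_mul_pow_le (κ := M x / C) (div_pos (hM.pos hx0) hC) hs
    (fun n => ?_) (hℬ.isBoundedUnder_setNorm_prodSet hd hN)
  obtain ⟨P, hP, hPx⟩ := exists_mem_prodSet_pow_mul_le hs h x n
  calc M x / C * s ^ n = s ^ n * M x / C := by ring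
    _ ≤ M (P *ᵥ x) / C := by gcongr
    _ ≤ N (P *ᵥ x) := by rw [div_le_iff₀ hC]; linarith [hMN (P *ᵥ x)]
    _ ≤ opNorm N P := apply_le_opNorm hd hN P hx
    _ ≤ setNorm N (prodSet ℬ n) := opNorm_le_setNorm_prodSet hd hN hℬ hP

end Products

section Eccentricity

variable {d : ℕ} {K : Type*} [RCLike K] {M N : (Fin d → K) → ℝ}

def ratioSet (M N : (Fin d → K) → ℝ) : Set ℝ := {r | ∃ x : Fin d → K, x ≠ 0 ∧ r = M x / N x}

lemma eccen_eq_sSup_div_sInf : eccen M N = sSup (ratioSet M N) / sInf (ratioSet M N) := rfl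

lemma nonneg_of_mem_ratioSet (hM : IsNorm M) (hN : IsNorm N) {r : ℝ} (hr : r ∈ ratioSet M N) :
    0 ≤ r := by
  obtain ⟨x, -, rfl⟩ := hr
  exact div_nonneg (hM.nonneg x) (hN.nonneg x)

lemma eccen_nonneg (hM : IsNorm M) (hN : IsNorm N) : 0 ≤ eccen M N :=
  div_nonneg (Real.sSup_nonneg fun _ hr => nonneg_of_mem_ratioSet hM hN hr)
    (Real.sInf_nonneg fun _ hr => nonneg_of_mem_ratioSet hM hN hr)

lemma sInf_ratioSet_pos (hd : 1 ≤ d) (hM : IsNorm M) (hN : IsNorm N) :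
    0 < sInf (ratioSet M N) := by
  obtain ⟨x, hx⟩ := hN.exists_eq_one hd
  have hx0 : x ≠ 0 := by rintro rfl; simp [hN.map_zero] at hx
  obtain ⟨C, hC, hNM⟩ := hN.exists_le_mul hd hM
  refine (inv_pos.mpr hC).trans_le (le_csInf ⟨_, x, hx0, rfl⟩ ?_)
  rintro _ ⟨y, hy, rfl⟩
  rw [inv_le_iff_one_le_mul₀ hC, div_mul_eq_mul_div, le_div_iff₀ (hN.pos hy), one_mul, mul_comm]
  exact hNM y

lemma sInf_ratioSet_mul_le (hM : IsNorm M) (hN : IsNorm N) (x : Fin d → K) :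
    sInf (ratioSet M N) * N x ≤ M x := by
  rcases eq_or_ne x 0 with rfl | hx
  · simp [hM.map_zero, hN.map_zero]
  rw [← le_div_iff₀ (hN.pos hx)]
  exact csInf_le ⟨0, fun _ hr => nonneg_of_mem_ratioSet hM hN hr⟩ ⟨x, hx, rfl⟩

lemma le_sSup_ratioSet_mul (hd : 1 ≤ d) (hM : IsNorm M) (hN : IsNorm N) (x : Fin d → K) :
    M x ≤ sSup (ratioSet M N) * N x := by
  rcases eq_or_ne x 0 with rfl | hx
  · simp [hM.map_zero, hN.map_zero]
  obtain ⟨C, -, hMN⟩ := hM.exists_le_mul hd hN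
  have hbdd : BddAbove (ratioSet M N) := by
    refine ⟨C, ?_⟩
    rintro _ ⟨y, hy, rfl⟩
    rw [div_le_iff₀ (hN.pos hy)]
    exact hMN y
  rw [← div_le_iff₀ (hN.pos hx)]
  exact le_csSup hbdd ⟨x, hx, rfl⟩

lemma apply_mulVec_le_eccen_mul_opNorm_mul (hd : 1 ≤ d) (hM : IsNorm M) (hN : IsNorm N)
    (D : Matrix (Fin d) (Fin d) K) (y : Fin d → K) :
    M (D *ᵥ y) ≤ eccen M N * opNorm N D * M y := by
  have hlow := sInf_ratioSet_pos hd hM hN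
  have hup : 0 ≤ sSup (ratioSet M N) := Real.sSup_nonneg fun _ hr => nonneg_of_mem_ratioSet hM hN hr
  calc M (D *ᵥ y) ≤ sSup (ratioSet M N) * N (D *ᵥ y) := le_sSup_ratioSet_mul hd hM hN _
    _ ≤ sSup (ratioSet M N) * (opNorm N D * (M y / sInf (ratioSet M N))) := by
      gcongr
      refine (apply_le_opNorm_mul hd hN D y).trans ?_
      gcongr
      · exact opNorm_nonneg hN D
      · rw [le_div_iff₀ hlow, mul_comm]
        exact sInf_ratioSet_mul_le hM hN y
    _ = eccen M N * opNorm N D * M y := by rw [eccen_eq_sSup_div_sInf]; ring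

end Eccentricity

section Hausdorff

variable {d : ℕ} {K : Type*} [RCLike K] {N : (Fin d → K) → ℝ}
  {𝒜 ℬ : Set (Matrix (Fin d) (Fin d) K)}

lemma sInf_opNorm_sub_le_hdist (hd : 1 ≤ d) (hN : IsNorm N) (h𝒜 : IsCompact 𝒜)
    (hℬ : ℬ.Nonempty) {A : Matrix (Fin d) (Fin d) K} (hA : A ∈ 𝒜) :
    sInf ((fun B => opNorm N (A - B)) '' ℬ) ≤ hdist N 𝒜 ℬ := by
  obtain ⟨B₀, hB₀⟩ := hℬ
  have hbddBelow (A' : Matrix (Fin d) (Fin d) K) :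
      BddBelow ((fun B => opNorm N (A' - B)) '' ℬ) :=
    ⟨0, fun _ ⟨B, _, hr⟩ => hr ▸ opNorm_nonneg hN _⟩
  obtain ⟨b, hb⟩ := bddAbove_opNorm_image hd hN (h𝒜.image (continuous_sub_right B₀))
  have hbdd : BddAbove ((fun A => sInf ((fun B => opNorm N (A - B)) '' ℬ)) '' 𝒜) := by
    refine ⟨b, ?_⟩
    rintro _ ⟨A', hA', rfl⟩
    exact (csInf_le (hbddBelow A') ⟨B₀, hB₀, rfl⟩).trans (hb ⟨A' - B₀, ⟨A', hA', rfl⟩, rfl⟩)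
  exact (le_csSup hbdd ⟨A, hA, rfl⟩).trans (le_max_left _ _)

lemma exists_opNorm_sub_lt_hdist_add (hd : 1 ≤ d) (hN : IsNorm N) (h𝒜 : IsCompact 𝒜)
    (hℬ : ℬ.Nonempty) {A : Matrix (Fin d) (Fin d) K} (hA : A ∈ 𝒜) {ε : ℝ} (hε : 0 < ε) :
    ∃ B ∈ ℬ, opNorm N (A - B) < hdist N 𝒜 ℬ + ε := by
  obtain ⟨_, ⟨B, hB, rfl⟩, hlt⟩ := exists_lt_of_csInf_lt (hℬ.image _)
    ((sInf_opNorm_sub_le_hdist hd hN h𝒜 hℬ hA).trans_lt (lt_add_of_pos_right _ hε))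
  exact ⟨B, hB, hlt⟩

end Hausdorff

section Barabanov

variable {d : ℕ} {K : Type*} [RCLike K] {N Nb : (Fin d → K) → ℝ}
  {𝒜 ℬ : Set (Matrix (Fin d) (Fin d) K)}

lemma IsBarabanov.exists_mem_jsr_mul_le (hNb : IsBarabanov N Nb 𝒜) (h𝒜ne : 𝒜.Nonempty)
    (h𝒜cp : IsCompact 𝒜) (y : Fin d → K) : ∃ A ∈ 𝒜, jsr N 𝒜 * Nb y ≤ Nb (A *ᵥ y) := by
  have hcont : Continuous fun A : Matrix (Fin d) (Fin d) K => Nb (A *ᵥ y) :=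
    hNb.1.continuous.comp (continuous_id.matrix_mulVec continuous_const)
  obtain ⟨A, hA, hmax⟩ := h𝒜cp.exists_isMaxOn h𝒜ne hcont.continuousOn
  refine ⟨A, hA, (hNb.2 y).trans_le (csSup_le ⟨_, A, hA, rfl⟩ ?_)⟩
  rintro _ ⟨A', hA', rfl⟩
  exact hmax hA'

lemma IsBarabanov.exists_mem_jsr_sub_eccen_mul_le (hd : 1 ≤ d) (hN : IsNorm N)
    (hNb : IsBarabanov N Nb 𝒜) (h𝒜ne : 𝒜.Nonempty) (h𝒜cp : IsCompact 𝒜) (hℬ : ℬ.Nonempty)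
    {ε : ℝ} (hε : 0 < ε) (y : Fin d → K) :
    ∃ B ∈ ℬ, (jsr N 𝒜 - eccen Nb N * (hdist N 𝒜 ℬ + ε)) * Nb y ≤ Nb (B *ᵥ y) := by
  obtain ⟨A, hA, hAy⟩ := hNb.exists_mem_jsr_mul_le h𝒜ne h𝒜cp y
  obtain ⟨B, hB, hAB⟩ := exists_opNorm_sub_lt_hdist_add hd hN h𝒜cp hℬ hA hε
  refine ⟨B, hB, ?_⟩
  have hsplit : Nb (A *ᵥ y) ≤ Nb (B *ᵥ y) + Nb ((A - B) *ᵥ y) := by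
    simpa [Matrix.sub_mulVec] using hNb.1.add_le (B *ᵥ y) ((A - B) *ᵥ y)
  have herr : Nb ((A - B) *ᵥ y) ≤ eccen Nb N * (hdist N 𝒜 ℬ + ε) * Nb y := by
    refine (apply_mulVec_le_eccen_mul_opNorm_mul hd hNb.1 hN _ y).trans ?_
    gcongr
    exacts [hNb.1.nonneg y, eccen_nonneg hNb.1 hN]
  linarith

end Barabanov

theorem jsr_lower_ecc_general {d : ℕ} (hd : 1 ≤ d) {K : Type*} [RCLike K]
    (N : (Fin d → K) → ℝ) (hN : IsNorm N)
    (𝒜 : Set (Matrix (Fin d) (Fin d) K))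
    (h𝒜ne : 𝒜.Nonempty) (h𝒜cp : IsCompact 𝒜)
    (Nb : (Fin d → K) → ℝ) (hNb : IsBarabanov N Nb 𝒜)
    (ℬ : Set (Matrix (Fin d) (Fin d) K)) (hℬne : ℬ.Nonempty) (hℬbd : IsBdd N ℬ) :
    jsr N 𝒜 - eccen Nb N * hdist N 𝒜 ℬ ≤ jsr N ℬ := by
  have hlim : Tendsto (fun ε => jsr N 𝒜 - eccen Nb N * (hdist N 𝒜 ℬ + ε)) (𝓝[>] 0)
      (𝓝 (jsr N 𝒜 - eccen Nb N * hdist N 𝒜 ℬ)) := by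
    refine tendsto_nhdsWithin_of_tendsto_nhds ?_
    have hcont : Continuous fun ε : ℝ => jsr N 𝒜 - eccen Nb N * (hdist N 𝒜 ℬ + ε) := by
      fun_prop
    simpa using hcont.tendsto 0
  refine le_of_tendsto hlim (eventually_nhdsWithin_of_forall fun ε hε => ?_)
  exact le_jsr_of_forall_exists_mul_le hd hN hNb.1 hℬbd
    (hNb.exists_mem_jsr_sub_eccen_mul_le hd hN h𝒜ne h𝒜cp hℬne hε)

/-- lower estimate `ρ(ℬ) ≥ ρ(𝒜) − C · H(𝒜, ℬ)` with
`C = ecc(‖·‖_𝒜, ‖·‖)`. -/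
theorem jsr_lower_ecc {d : ℕ} (hd : 1 ≤ d) {K : Type*} [RCLike K]
    (N : (Fin d → K) → ℝ) (hN : IsNorm N)
    (𝒜 : Set (Matrix (Fin d) (Fin d) K))
    (h𝒜ne : 𝒜.Nonempty) (h𝒜cp : IsCompact 𝒜) (h𝒜ir : IsIrred 𝒜)
    (Nb : (Fin d → K) → ℝ) (hNb : IsBarabanov N Nb 𝒜)
    (ℬ : Set (Matrix (Fin d) (Fin d) K)) (hℬne : ℬ.Nonempty) (hℬbd : IsBdd N ℬ) :
    jsr N 𝒜 - eccen Nb N * hdist N 𝒜 ℬ ≤ jsr N ℬ :=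
  jsr_lower_ecc_general hd N hN 𝒜 h𝒜ne h𝒜cp Nb hNb ℬ hℬne hℬbd

end JSRPaper
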